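/- arXiv:1605.06257 — 5 statements merged into one kernel-verified Lean document; each statement's English description precedes it below -/
import Mathlib

section
/- Let N ≥ 1, let V, Ṽ : ℝ^N → ℝ^N be continuous, and let X̃ : ℝ × ℝ^N → ℝ^N be a C¹ flow of Ṽ. Let T > 0 and let x : [0,T] → ℝ^N be continuously differentiable with x′(s) = V(x(s)) for all s ∈ [0,T]. Then for every t ∈ [0,T], x(t) − X̃(t, x(0)) = ∫₀ᵗ D_yX̃(t−s, x(s)) ( V(x(s)) − Ṽ(x(s)) ) ds. -/
/-!
With `g s = X̃ (t - s) (x s)` we have `g 0 = X̃ t (x 0)` and `g t = x t`, so the identity is the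
fundamental theorem of calculus for `g`. By the chain rule
`g' s = D_yX̃ (t - s, x s) (V (x s)) - ∂ₜX̃ (t - s, x s)`, and differentiating the group law
`X̃ (τ + s) y = X̃ τ (X̃ s y)` at `s = 0` gives `∂ₜX̃ (τ, y) = Ṽ (X̃ τ y) = D_yX̃ (τ, y) (Ṽ y)`.
-/

open Function Set

section PartialDerivatives

variable {𝕜 G E F : Type*} [NontriviallyNormedField 𝕜]
  [NormedAddCommGroup G] [NormedSpace 𝕜 G] [NormedAddCommGroup E] [NormedSpace 𝕜 E]
  [NormedAddCommGroup F] [NormedSpace 𝕜 F] {f : G → E → F} {a : G} {y : E}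

theorem HasFDerivAt.partial_right {L : G × E →L[𝕜] F} (h : HasFDerivAt (uncurry f) L (a, y)) :
    HasFDerivAt (f a) (L.comp (.inr 𝕜 G E)) y :=
  h.comp y (hasFDerivAt_prodMk_right a y)

theorem HasFDerivAt.partial_left {L : G × E →L[𝕜] F} (h : HasFDerivAt (uncurry f) L (a, y)) :
    HasFDerivAt (f · y) (L.comp (.inl 𝕜 G E)) a :=
  h.comp (f := fun e => (e, y)) a (hasFDerivAt_prodMk_left a y)

theorem fderiv_eq_fderiv_uncurry_comp_inr (h : DifferentiableAt 𝕜 (uncurry f) (a, y)) :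
    fderiv 𝕜 (f a) y = (fderiv 𝕜 (uncurry f) (a, y)).comp (.inr 𝕜 G E) :=
  h.hasFDerivAt.partial_right.fderiv

theorem ContDiff.continuous_fderiv_right (h : ContDiff 𝕜 1 (uncurry f)) :
    Continuous fun p : G × E => fderiv 𝕜 (f p.1) p.2 := by
  have hd := h.differentiable one_ne_zero
  simp_rw [fun p : G × E => fderiv_eq_fderiv_uncurry_comp_inr (hd (p.1, p.2))]
  exact (h.continuous_fderiv one_ne_zero).clm_comp continuous_const

end PartialDerivatives

section Flow

variable {E : Type*} [NormedAddCommGroup E] [NormedSpace ℝ E]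
  {X : ℝ → E → E} {W : E → E}

theorem fderiv_uncurry_apply_one_zero {τ : ℝ} {y w : E}
    (hX : DifferentiableAt ℝ (uncurry X) (τ, y)) (hτ : HasDerivAt (X · y) w τ) :
    fderiv ℝ (uncurry X) (τ, y) (1, 0) = w :=
  hX.hasFDerivAt.partial_left.hasDerivAt.unique hτ

theorem fderiv_flow_apply_vectorField (hX0 : ∀ y, X 0 y = y)
    (hXode : ∀ t y, HasDerivAt (X · y) (W (X t y)) t)
    (hXgroup : ∀ s t y, X (t + s) y = X t (X s y)) {τ : ℝ} {y : E}
    (hd : DifferentiableAt ℝ (X τ) y) :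
    fderiv ℝ (X τ) y (W y) = W (X τ y) := by
  have h₁ : HasDerivAt (fun s => X (τ + s) y) (W (X τ y)) 0 :=
    HasDerivAt.comp_const_add τ 0 (by simpa using hXode τ y)
  have h₂ : HasDerivAt (fun s => X τ (X s y)) (fderiv ℝ (X τ) y (W y)) 0 := by
    have hin : HasDerivAt (X · y) (W y) 0 := by simpa [hX0] using hXode 0 y
    have hout : HasFDerivAt (X τ) (fderiv ℝ (X τ) y) (X 0 y) := by
      rw [hX0]
      exact hd.hasFDerivAt
    exact hout.comp_hasDerivAt 0 hin
  simp_rw [← hXgroup] at h₂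
  exact h₂.unique h₁

theorem hasDerivAt_flow_sub_comp (hX : Differentiable ℝ (uncurry X)) (hX0 : ∀ y, X 0 y = y)
    (hXode : ∀ t y, HasDerivAt (X · y) (W (X t y)) t)
    (hXgroup : ∀ s t y, X (t + s) y = X t (X s y)) {x : ℝ → E} {v : E} {s t : ℝ}
    (hx : HasDerivAt x v s) :
    HasDerivAt (fun s => X (t - s) (x s)) (fderiv ℝ (X (t - s)) (x s) (v - W (x s))) s := by
  have hcurve : HasDerivAt (fun s => (t - s, x s)) ((-1 : ℝ), v) s :=
    ((hasDerivAt_id s).const_sub t).prodMk hx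
  refine ((hX _).hasFDerivAt.comp_hasDerivAt s hcurve).congr_deriv ?_
  have hd := hX (t - s, x s)
  have hflow := fderiv_flow_apply_vectorField hX0 hXode hXgroup
    hd.hasFDerivAt.partial_right.differentiableAt
  rw [map_sub, hflow, ← fderiv_uncurry_apply_one_zero hd (hXode _ _),
    fderiv_eq_fderiv_uncurry_comp_inr hd, ContinuousLinearMap.comp_apply,
    ContinuousLinearMap.inr_apply, ← map_sub, Prod.mk_sub_mk, zero_sub, sub_zero]

theorem sub_flow_eq_integral_fderiv_flow [CompleteSpace E] (hX : ContDiff ℝ 1 (uncurry X))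
    (hW : Continuous W) (hX0 : ∀ y, X 0 y = y)
    (hXode : ∀ t y, HasDerivAt (X · y) (W (X t y)) t)
    (hXgroup : ∀ s t y, X (t + s) y = X t (X s y)) {x x' : ℝ → E} {t : ℝ} (ht : 0 ≤ t)
    (hx : ∀ s ∈ Icc 0 t, HasDerivWithinAt x (x' s) (Icc 0 t) s)
    (hx' : ContinuousOn x' (Icc 0 t)) :
    x t - X t (x 0) = ∫ s in 0..t, fderiv ℝ (X (t - s)) (x s) (x' s - W (x s)) := by
  have hxc : ContinuousOn x (Icc 0 t) := fun s hs => (hx s hs).continuousWithinAt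
  have hcurve : ContinuousOn (fun s => (t - s, x s)) (Icc 0 t) :=
    (continuousOn_const.sub continuousOn_id).prodMk hxc
  have hFTC := intervalIntegral.integral_eq_sub_of_hasDeriv_right_of_le ht
    (f := fun s => X (t - s) (x s)) (hX.continuous.comp_continuousOn hcurve)
    (fun s hs => (hasDerivAt_flow_sub_comp (hX.differentiable one_ne_zero) hX0 hXode hXgroup
      ((hx s (Ioo_subset_Icc_self hs)).hasDerivAt (Icc_mem_nhds hs.1 hs.2))).hasDerivWithinAt)
    (((hX.continuous_fderiv_right.comp_continuousOn hcurve).clm_apply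
      (hx'.sub (hW.comp_continuousOn hxc))).intervalIntegrable_of_Icc ht)
  simpa [hX0] using hFTC.symm

end Flow

theorem stmt_1_general (N : ℕ)
    (V Vt : (Fin N → ℝ) → (Fin N → ℝ)) (hV : Continuous V) (hVt : Continuous Vt)
    (X : ℝ → (Fin N → ℝ) → (Fin N → ℝ))
    (hXC1 : ContDiff ℝ 1 (fun p : ℝ × (Fin N → ℝ) => X p.1 p.2))
    (hX0 : ∀ y, X 0 y = y)
    (hXode : ∀ t y, HasDerivAt (fun τ => X τ y) (Vt (X t y)) t)
    (hXgroup : ∀ s t : ℝ, ∀ y, X (t + s) y = X t (X s y))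
    (T : ℝ)
    (x : ℝ → (Fin N → ℝ))
    (hx : ∀ s ∈ Set.Icc (0 : ℝ) T, HasDerivWithinAt x (V (x s)) (Set.Icc (0 : ℝ) T) s) :
    ∀ t ∈ Set.Icc (0 : ℝ) T,
      x t - X t (x 0)
        = ∫ s in (0 : ℝ)..t, (fderiv ℝ (X (t - s)) (x s)) (V (x s) - Vt (x s)) := by
  rintro t ⟨ht0, htT⟩
  have hsub : Icc 0 t ⊆ Icc 0 T := Icc_subset_Icc_right htT
  have hxc : ContinuousOn x (Icc 0 t) := fun s hs => (hx s (hsub hs)).continuousWithinAt.mono hsub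
  exact sub_flow_eq_integral_fderiv_flow hXC1 hVt hX0 hXode hXgroup ht0
    (fun s hs => (hx s (hsub hs)).mono hsub) (hV.comp_continuousOn hxc)

/-- The Stefanov–Uhlmann integral identity comparing a trajectory of `V`
with the flow of `Ṽ` having the same initial point. -/
theorem stmt_1 (N : ℕ) (hN : 1 ≤ N)
    (V Vt : (Fin N → ℝ) → (Fin N → ℝ)) (hV : Continuous V) (hVt : Continuous Vt)
    (X : ℝ → (Fin N → ℝ) → (Fin N → ℝ))
    (hXC1 : ContDiff ℝ 1 (fun p : ℝ × (Fin N → ℝ) => X p.1 p.2))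
    (hX0 : ∀ y, X 0 y = y)
    (hXode : ∀ t y, HasDerivAt (fun τ => X τ y) (Vt (X t y)) t)
    (hXgroup : ∀ s t : ℝ, ∀ y, X (t + s) y = X t (X s y))
    (T : ℝ) (hT : 0 < T)
    (x : ℝ → (Fin N → ℝ))
    (hx : ∀ s ∈ Set.Icc (0 : ℝ) T, HasDerivWithinAt x (V (x s)) (Set.Icc (0 : ℝ) T) s) :
    ∀ t ∈ Set.Icc (0 : ℝ) T,
      x t - X t (x 0)
        = ∫ s in (0 : ℝ)..t, (fderiv ℝ (X (t - s)) (x s)) (V (x s) - Vt (x s)) :=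
  stmt_1_general N V Vt hV hVt X hXC1 hX0 hXode hXgroup T x hx
end

section
/- Let N ≥ 1, let V, Ṽ : ℝ^N → ℝ^N be continuous, and let X̃ : ℝ × ℝ^N → ℝ^N be a C¹ flow of Ṽ. Let T > 0 and let x : [0,T] → ℝ^N be continuously differentiable with x′(s) = V(x(s)) for all s ∈ [0,T]. If the two trajectories have the same endpoint, i.e. x(T) = X̃(T, x(0)), then ∫₀ᵀ D_yX̃(T−s, x(s)) ( V(x(s)) − Ṽ(x(s)) ) ds = 0. -/
/-!
The curve `s ↦ X (T - s) (x s)` runs from `X T (x 0)` to `x T`. Differentiating it, the time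
derivative of the flow contributes `-W (X (T - s) (x s))`, which equals
`-D_y X (T - s) (x s) (W (x s))` because the flow transports its own vector field
(differentiate `X (t + σ) y = X t (X σ y)` at `σ = 0`). Hence the integrand is the derivative of
this curve, and the integral is `x T - X T (x 0)` by the fundamental theorem of calculus.
-/

open Set Function

structure IsFlow {E : Type*} [NormedAddCommGroup E] [NormedSpace ℝ E]
    (X : ℝ → E → E) (W : E → E) : Prop where
  zero : ∀ y, X 0 y = y
  hasDerivAt : ∀ t y, HasDerivAt (fun τ => X τ y) (W (X t y)) t
  add : ∀ s t y, X (t + s) y = X t (X s y)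

section

variable {E : Type*} [NormedAddCommGroup E] [NormedSpace ℝ E] {X : ℝ → E → E} {W : E → E}

theorem hasFDerivAt_apply_of_differentiableAt_uncurry {t : ℝ} {y : E}
    (hXd : DifferentiableAt ℝ (uncurry X) (t, y)) :
    HasFDerivAt (X t) ((fderiv ℝ (uncurry X) (t, y)).comp (.inr ℝ ℝ E)) y :=
  hXd.hasFDerivAt.comp y (hasFDerivAt_prodMk_right t y)

namespace IsFlow

theorem fderiv_apply_vectorField (hX : IsFlow X W) {t : ℝ} {y : E}
    (hXt : DifferentiableAt ℝ (X t) y) : fderiv ℝ (X t) y (W y) = W (X t y) := by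
  have h_shift : HasDerivAt (fun σ => X (t + σ) y) (W (X t y)) 0 :=
    HasDerivAt.comp_const_add t 0 (by simpa using hX.hasDerivAt t y)
  have h_comp : HasDerivAt (fun σ => X t (X σ y)) (fderiv ℝ (X t) y (W y)) 0 := by
    have hXt' : HasFDerivAt (X t) (fderiv ℝ (X t) y) (X 0 y) := by
      simpa [hX.zero] using hXt.hasFDerivAt
    exact hXt'.comp_hasDerivAt 0 (by simpa [hX.zero] using hX.hasDerivAt 0 y)
  simp only [← hX.add] at h_comp
  exact h_comp.unique h_shift

theorem fderiv_uncurry_apply (hX : IsFlow X W) {t : ℝ} {y : E}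
    (hXd : DifferentiableAt ℝ (uncurry X) (t, y)) (τ : ℝ) (v : E) :
    fderiv ℝ (uncurry X) (t, y) (τ, v) = τ • W (X t y) + fderiv ℝ (X t) y v := by
  have h_time : fderiv ℝ (uncurry X) (t, y) (1, 0) = W (X t y) := by
    have h := hXd.hasFDerivAt.comp_hasDerivAt t ((hasDerivAt_id t).prodMk (hasDerivAt_const t y))
    exact h.unique (hX.hasDerivAt t y)
  have h_space : fderiv ℝ (uncurry X) (t, y) (0, v) = fderiv ℝ (X t) y v := by
    rw [(hasFDerivAt_apply_of_differentiableAt_uncurry hXd).fderiv]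
    rfl
  have h_split : ((τ, v) : ℝ × E) = τ • (1, 0) + (0, v) := by simp
  rw [h_split, map_add, map_smul, h_time, h_space]

theorem fderiv_uncurry_apply_neg_one_eq (hX : IsFlow X W) {t : ℝ} {y : E}
    (hXd : DifferentiableAt ℝ (uncurry X) (t, y)) (v : E) :
    fderiv ℝ (uncurry X) (t, y) (-1, v) = fderiv ℝ (X t) y (v - W y) := by
  rw [hX.fderiv_uncurry_apply hXd, map_sub,
    hX.fderiv_apply_vectorField (hasFDerivAt_apply_of_differentiableAt_uncurry hXd).differentiableAt,
    neg_one_smul, neg_add_eq_sub]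

theorem hasDerivWithinAt_apply_sub (hX : IsFlow X W) (hXd : Differentiable ℝ (uncurry X))
    {V : E → E} {x : ℝ → E} {S : Set ℝ} {T s : ℝ} (hx : HasDerivWithinAt x (V (x s)) S s) :
    HasDerivWithinAt (fun σ => X (T - σ) (x σ))
      (fderiv ℝ (X (T - s)) (x s) (V (x s) - W (x s))) S s := by
  rw [← hX.fderiv_uncurry_apply_neg_one_eq (hXd _)]
  have h_time : HasDerivWithinAt (fun σ => T - σ) (-1) S s := by
    simpa using ((hasDerivAt_id s).const_sub T).hasDerivWithinAt
  exact (hXd _).hasFDerivAt.comp_hasDerivWithinAt (l := uncurry X) s (h_time.prodMk hx)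

theorem integral_fderiv_apply_sub [CompleteSpace E] (hX : IsFlow X W)
    (hXC1 : ContDiff ℝ 1 (uncurry X)) {V : E → E} (hV : Continuous V) {x : ℝ → E} {T : ℝ}
    (hT : 0 ≤ T) (hx : ∀ s ∈ Icc 0 T, HasDerivWithinAt x (V (x s)) (Icc 0 T) s) :
    ∫ s in (0 : ℝ)..T, fderiv ℝ (X (T - s)) (x s) (V (x s) - W (x s)) = x T - X T (x 0) := by
  have hXd : Differentiable ℝ (uncurry X) := hXC1.differentiable one_ne_zero
  have hx_cont : ContinuousOn x (Icc 0 T) := fun s hs => (hx s hs).continuousWithinAt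
  have h_deriv : ∀ s ∈ Icc 0 T, HasDerivWithinAt (fun σ => X (T - σ) (x σ))
      (fderiv ℝ (X (T - s)) (x s) (V (x s) - W (x s))) (Icc 0 T) s :=
    fun s hs => hX.hasDerivWithinAt_apply_sub hXd (hx s hs)
  have h_integrand_cont : ContinuousOn
      (fun s => fderiv ℝ (X (T - s)) (x s) (V (x s) - W (x s))) (Icc 0 T) := by
    simp only [← hX.fderiv_uncurry_apply_neg_one_eq (hXd _)]
    exact ((hXC1.continuous_fderiv one_ne_zero).comp_continuousOn
      ((continuous_const.sub continuous_id).continuousOn.prodMk hx_cont)).clm_apply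
      (continuousOn_const.prodMk (hV.comp_continuousOn hx_cont))
  rw [intervalIntegral.integral_eq_sub_of_hasDerivAt_of_le hT
      (fun s hs => (h_deriv s hs).continuousWithinAt)
      (fun s hs => (h_deriv s (Ioo_subset_Icc_self hs)).hasDerivAt (Icc_mem_nhds hs.1 hs.2))
      (h_integrand_cont.intervalIntegrable_of_Icc hT)]
  simp [hX.zero]

end IsFlow

end

theorem stmt_2_general (N : ℕ)
    (V Vt : (Fin N → ℝ) → (Fin N → ℝ)) (hV : Continuous V)
    (X : ℝ → (Fin N → ℝ) → (Fin N → ℝ))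
    (hXC1 : ContDiff ℝ 1 (fun p : ℝ × (Fin N → ℝ) => X p.1 p.2))
    (hX0 : ∀ y, X 0 y = y)
    (hXode : ∀ t y, HasDerivAt (fun τ => X τ y) (Vt (X t y)) t)
    (hXgroup : ∀ s t : ℝ, ∀ y, X (t + s) y = X t (X s y))
    (T : ℝ) (hT : 0 < T)
    (x : ℝ → (Fin N → ℝ))
    (hx : ∀ s ∈ Set.Icc (0 : ℝ) T, HasDerivWithinAt x (V (x s)) (Set.Icc (0 : ℝ) T) s)
    (hend : x T = X T (x 0)) :
    (∫ s in (0 : ℝ)..T, (fderiv ℝ (X (T - s)) (x s)) (V (x s) - Vt (x s))) = 0 := by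
  rw [IsFlow.integral_fderiv_apply_sub ⟨hX0, hXode, hXgroup⟩ hXC1 hV hT.le hx, hend, sub_self]

/-- If a trajectory of `V` and the flow of `Ṽ` issued from the same
initial point reach the same endpoint at time `T`, then the Stefanov–Uhlmann
integral vanishes. -/
theorem stmt_2 (N : ℕ) (hN : 1 ≤ N)
    (V Vt : (Fin N → ℝ) → (Fin N → ℝ)) (hV : Continuous V) (hVt : Continuous Vt)
    (X : ℝ → (Fin N → ℝ) → (Fin N → ℝ))
    (hXC1 : ContDiff ℝ 1 (fun p : ℝ × (Fin N → ℝ) => X p.1 p.2))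
    (hX0 : ∀ y, X 0 y = y)
    (hXode : ∀ t y, HasDerivAt (fun τ => X τ y) (Vt (X t y)) t)
    (hXgroup : ∀ s t : ℝ, ∀ y, X (t + s) y = X t (X s y))
    (T : ℝ) (hT : 0 < T)
    (x : ℝ → (Fin N → ℝ))
    (hx : ∀ s ∈ Set.Icc (0 : ℝ) T, HasDerivWithinAt x (V (x s)) (Set.Icc (0 : ℝ) T) s)
    (hend : x T = X T (x 0)) :
    (∫ s in (0 : ℝ)..T, (fderiv ℝ (X (T - s)) (x s)) (V (x s) - Vt (x s))) = 0 :=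
  stmt_2_general N V Vt hV X hXC1 hX0 hXode hXgroup T hT x hx hend
end

section
/- Let n ≥ 3, let (ξ, η) ∈ ℝ × ℝⁿ⁻¹ be nonzero, and let δ > 0. Then the real linear span of the set C = { (s, y) ∈ ℝ × ℝⁿ⁻¹ : |y| = 1, ξ s + ⟨η, y⟩ = 0, |s| < δ } equals the full hyperplane { (s, y) ∈ ℝ × ℝⁿ⁻¹ : ξ s + ⟨η, y⟩ = 0 }. In particular, C contains n−1 linearly independent vectors of ℝⁿ = ℝ × ℝⁿ⁻¹. -/
open RealInnerProductSpace

set_option maxHeartbeats 2000000 in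
/-- For `n = m + 1 ≥ 3`, a nonzero covector `(ξ, η) ∈ ℝ × ℝⁿ⁻¹` and
`δ > 0`, the span of `C = {(s,y) : |y| = 1, ξs + ⟨η,y⟩ = 0, |s| < δ}` is the whole
hyperplane `{(s,y) : ξs + ⟨η,y⟩ = 0}`; in particular `C` contains `n − 1 = m`
linearly independent vectors. -/
theorem stmt_9 (m : ℕ) (hm : 2 ≤ m)
    (ξ : ℝ) (η : EuclideanSpace ℝ (Fin m)) (hζ : ¬(ξ = 0 ∧ η = 0))
    (δ : ℝ) (hδ : 0 < δ) :
    (Submodule.span ℝ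
        {p : ℝ × EuclideanSpace ℝ (Fin m) | ‖p.2‖ = 1 ∧ ξ * p.1 + ⟪η, p.2⟫ = 0 ∧ |p.1| < δ}
        : Set (ℝ × EuclideanSpace ℝ (Fin m)))
      = {p : ℝ × EuclideanSpace ℝ (Fin m) | ξ * p.1 + ⟪η, p.2⟫ = 0}
    ∧ ∃ w : Fin m → ℝ × EuclideanSpace ℝ (Fin m),
        (∀ i, ‖(w i).2‖ = 1 ∧ ξ * (w i).1 + ⟪η, (w i).2⟫ = 0 ∧ |(w i).1| < δ)
        ∧ LinearIndependent ℝ w := by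
  classical
  set C : Set (ℝ × EuclideanSpace ℝ (Fin m)) :=
    {p : ℝ × EuclideanSpace ℝ (Fin m) | ‖p.2‖ = 1 ∧ ξ * p.1 + ⟪η, p.2⟫ = 0 ∧ |p.1| < δ}
    with hCdef
  -- the defining linear functional
  obtain ⟨f, hf⟩ : ∃ f : (ℝ × EuclideanSpace ℝ (Fin m)) →ₗ[ℝ] ℝ,
      ∀ p : ℝ × EuclideanSpace ℝ (Fin m), f p = ξ * p.1 + ⟪η, p.2⟫ :=
    ⟨{ toFun := fun p => ξ * p.1 + ⟪η, p.2⟫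
       map_add' := fun p q => by simp [inner_add_right]; ring
       map_smul' := fun a p => by simp [inner_smul_right]; ring }, fun p => rfl⟩
  -- a unit vector orthogonal to η
  obtain ⟨v, hv1, hvη⟩ : ∃ v : EuclideanSpace ℝ (Fin m), ‖v‖ = 1 ∧ ⟪η, v⟫ = 0 := by
    set g := (innerSL ℝ η).toLinearMap with hg
    have hrn := LinearMap.finrank_range_add_finrank_ker g
    rw [show Module.finrank ℝ (EuclideanSpace ℝ (Fin m)) = m from finrank_euclideanSpace_fin]
      at hrn
    have hr1 : Module.finrank ℝ ↥(LinearMap.range g) ≤ 1 := by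
      simpa using Submodule.finrank_le (LinearMap.range g)
    have hker0 : LinearMap.ker g ≠ ⊥ := by
      intro h
      rw [← Submodule.finrank_eq_zero] at h
      omega
    obtain ⟨v', hv'mem, hv'0⟩ := Submodule.exists_mem_ne_zero_of_ne_bot hker0
    have hv'ker : ⟪η, v'⟫ = 0 := by
      have := (LinearMap.mem_ker).mp hv'mem
      simpa [hg] using this
    refine ⟨‖v'‖⁻¹ • v', ?_, ?_⟩
    · rw [norm_smul, norm_inv, norm_norm, inv_mul_cancel₀ (norm_ne_zero_iff.mpr hv'0)]
    · rw [real_inner_smul_right, hv'ker, mul_zero]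
  set u : EuclideanSpace ℝ (Fin m) := ‖η‖⁻¹ • η with hu
  have huη : ⟪η, u⟫ = ‖η‖ := by
    by_cases hη : η = 0
    · simp [hu, hη]
    · rw [hu, real_inner_smul_right, real_inner_self_eq_norm_sq]
      have : ‖η‖ ≠ 0 := norm_ne_zero_iff.mpr hη
      field_simp
  have huv : ⟪u, v⟫ = 0 := by
    rw [hu, real_inner_smul_left, hvη, mul_zero]
  have hu1 : ‖u‖ = 1 ∨ u = 0 := by
    by_cases hη : η = 0
    · right; simp [hu, hη]
    · left
      rw [hu, norm_smul, norm_inv, norm_norm,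
        inv_mul_cancel₀ (norm_ne_zero_iff.mpr hη)]
  clear_value u
  -- membership of the kernel in the span
  have hkerC : ∀ p : ℝ × EuclideanSpace ℝ (Fin m),
      ξ * p.1 + ⟪η, p.2⟫ = 0 → p ∈ Submodule.span ℝ C := by
    rintro ⟨s, y⟩ hp
    have hp' : ξ * s + ⟪η, y⟫ = 0 := hp
    set c : ℝ := ⟪u, y⟫ with hc
    have hcη : c * ‖η‖ = ⟪η, y⟫ := by
      by_cases hη : η = 0
      · simp [hc, hu, hη]
      · have hn : ‖η‖ ≠ 0 := norm_ne_zero_iff.mpr hη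
        rw [hc, hu, real_inner_smul_left, real_inner_comm]
        field_simp
    have hcu2 : c ^ 2 * ‖u‖ ^ 2 = c ^ 2 := by
      by_cases hη : η = 0
      · have : c = 0 := by simp [hc, hu, hη]
        simp [this]
      · have hn : ‖η‖ ≠ 0 := norm_ne_zero_iff.mpr hη
        have : ‖u‖ = 1 := by
          rw [hu, norm_smul, norm_inv, norm_norm, inv_mul_cancel₀ hn]
        rw [this]; ring
    clear_value c
    set l : ℝ := min (δ / (2 * (|s| + 1))) (1 / (2 * (|c| + 1))) with hl
    have hl0 : 0 < l := lt_min (by positivity) (by positivity)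
    have hls : l * |s| < δ := by
      have h1 : l ≤ δ / (2 * (|s| + 1)) := min_le_left _ _
      have h2 : l * |s| ≤ (δ / (2 * (|s| + 1))) * |s| :=
        mul_le_mul_of_nonneg_right h1 (abs_nonneg s)
      have h3 : (δ / (2 * (|s| + 1))) * |s| < δ := by
        rw [div_mul_eq_mul_div, div_lt_iff₀ (by positivity)]
        nlinarith [abs_nonneg s]
      linarith
    have hlc : l * |c| < 1 := by
      have h1 : l ≤ 1 / (2 * (|c| + 1)) := min_le_right _ _
      have h2 : l * |c| ≤ (1 / (2 * (|c| + 1))) * |c| :=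
        mul_le_mul_of_nonneg_right h1 (abs_nonneg c)
      have h3 : (1 / (2 * (|c| + 1))) * |c| < 1 := by
        rw [div_mul_eq_mul_div, div_lt_iff₀ (by positivity)]
        nlinarith [abs_nonneg c]
      linarith
    have hlc2 : (l * c) ^ 2 < 1 := by
      have h4 : (l * |c|) ^ 2 < 1 := by nlinarith [mul_nonneg hl0.le (abs_nonneg c)]
      calc (l * c) ^ 2 = (l * |c|) ^ 2 := by rw [mul_pow, mul_pow, sq_abs]
        _ < 1 := h4
    set b : ℝ := Real.sqrt (1 - (l * c) ^ 2) with hb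
    have hb2 : b ^ 2 = 1 - (l * c) ^ 2 := Real.sq_sqrt (by nlinarith)
    have hbnn : 0 ≤ b := Real.sqrt_nonneg _
    clear_value l b
    -- z₁ is in C
    have hnorm1 : ‖(l * c) • u + b • v‖ = 1 := by
      have hbs : ‖b • v‖ ^ 2 = b ^ 2 := by
        rw [norm_smul, hv1, mul_one, Real.norm_eq_abs, sq_abs]
      have hus : ‖(l * c) • u‖ ^ 2 = (l * c) ^ 2 * ‖u‖ ^ 2 := by
        rw [norm_smul, Real.norm_eq_abs, mul_pow, sq_abs]
      have hn2 : ‖(l * c) • u + b • v‖ ^ 2 = 1 := by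
        rw [norm_add_sq_real, real_inner_smul_left, real_inner_smul_right, huv, hbs, hus]
        linear_combination l ^ 2 * hcu2 + hb2
      have h9 : (‖(l * c) • u + b • v‖ - 1) * (‖(l * c) • u + b • v‖ + 1) = 0 := by
        linear_combination hn2
      rcases mul_eq_zero.mp h9 with h10 | h10
      · linarith
      · linarith [norm_nonneg ((l * c) • u + b • v)]
    have hfun1 : ξ * (l * s) + ⟪η, (l * c) • u + b • v⟫ = 0 := by
      rw [inner_add_right, real_inner_smul_right, real_inner_smul_right, huη, hvη]
      linear_combination l * hp' + l * hcη
    have habs1 : |l * s| < δ := by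
      rw [abs_mul, abs_of_pos hl0]; exact hls
    have hz₁C : ((l * s, (l * c) • u + b • v) : ℝ × EuclideanSpace ℝ (Fin m)) ∈ C :=
      ⟨hnorm1, hfun1, habs1⟩
    have hz₂C : (((0 : ℝ), v) : ℝ × EuclideanSpace ℝ (Fin m)) ∈ C :=
      ⟨hv1, by simpa using hvη, by simpa using hδ⟩
    have h1 := Submodule.subset_span (R := ℝ) hz₁C
    have h2 := Submodule.subset_span (R := ℝ) hz₂C
    have key : ((s : ℝ), c • u) ∈ Submodule.span ℝ C := by
      have hmem := Submodule.sub_mem _ (Submodule.smul_mem _ l⁻¹ h1)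
        (Submodule.smul_mem _ (l⁻¹ * b) h2)
      have heq : ((s : ℝ), c • u)
          = l⁻¹ • ((l * s, (l * c) • u + b • v) : ℝ × EuclideanSpace ℝ (Fin m))
            - (l⁻¹ * b) • (((0 : ℝ), v) : ℝ × EuclideanSpace ℝ (Fin m)) := by
        rw [Prod.smul_mk, Prod.smul_mk, Prod.mk_sub_mk]
        refine Prod.ext ?_ ?_
        · show s = l⁻¹ • (l * s) - (l⁻¹ * b) • (0 : ℝ)
          simp only [smul_eq_mul, mul_zero, sub_zero]
          field_simp
        · show c • u = l⁻¹ • ((l * c) • u + b • v) - (l⁻¹ * b) • v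
          rw [smul_add, smul_smul, smul_smul]
          have h5 : l⁻¹ * (l * c) = c := by field_simp
          rw [h5]
          abel
      rw [heq]; exact hmem
    have hy' : (((0 : ℝ), y - c • u) : ℝ × EuclideanSpace ℝ (Fin m))
        ∈ Submodule.span ℝ C := by
      by_cases h0 : y - c • u = 0
      · rw [h0]
        exact Submodule.zero_mem _
      · have hne : ‖y - c • u‖ ≠ 0 := norm_ne_zero_iff.mpr h0
        have hinner : ⟪η, y - c • u⟫ = 0 := by
          rw [inner_sub_right, real_inner_smul_right, huη]
          linarith [hcη]
        have hmemC : (((0 : ℝ), ‖y - c • u‖⁻¹ • (y - c • u))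
            : ℝ × EuclideanSpace ℝ (Fin m)) ∈ C := by
          refine ⟨?_, ?_, by simpa using hδ⟩
          · rw [norm_smul, norm_inv, norm_norm, inv_mul_cancel₀ hne]
          · show ξ * 0 + ⟪η, ‖y - c • u‖⁻¹ • (y - c • u)⟫ = 0
            rw [real_inner_smul_right, hinner, mul_zero, mul_zero, add_zero]
        have hsm := Submodule.smul_mem (Submodule.span ℝ C) (‖y - c • u‖)
          (Submodule.subset_span hmemC)
        have heq : (((0 : ℝ), y - c • u) : ℝ × EuclideanSpace ℝ (Fin m))
            = ‖y - c • u‖ • (((0 : ℝ), ‖y - c • u‖⁻¹ • (y - c • u))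
              : ℝ × EuclideanSpace ℝ (Fin m)) := by
          rw [Prod.smul_mk, smul_smul, mul_inv_cancel₀ hne, one_smul, smul_zero]
        rw [heq]; exact hsm
    have hsum := Submodule.add_mem _ key hy'
    have heq2 : ((s, y) : ℝ × EuclideanSpace ℝ (Fin m))
        = ((s : ℝ), c • u) + ((0 : ℝ), y - c • u) := by
      refine Prod.ext (by simp) ?_
      show y = c • u + (y - c • u)
      abel
    rw [heq2]; exact hsum
  -- span equality
  have hspan : Submodule.span ℝ C = LinearMap.ker f := by
    apply le_antisymm
    · rw [Submodule.span_le]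
      intro p hp
      exact LinearMap.mem_ker.mpr ((hf p).trans hp.2.1)
    · intro p hp
      exact hkerC p ((hf p).symm.trans (LinearMap.mem_ker.mp hp))
  have hset : (Submodule.span ℝ C : Set (ℝ × EuclideanSpace ℝ (Fin m)))
      = {p : ℝ × EuclideanSpace ℝ (Fin m) | ξ * p.1 + ⟪η, p.2⟫ = 0} := by
    rw [hspan]
    ext p
    simp only [SetLike.mem_coe, LinearMap.mem_ker, Set.mem_setOf_eq, hf]
  -- finrank of the kernel
  have hfr : Module.finrank ℝ ↥(LinearMap.ker f) = m := by
    have hrn := LinearMap.finrank_range_add_finrank_ker f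
    have hV : Module.finrank ℝ (ℝ × EuclideanSpace ℝ (Fin m)) = 1 + m := by
      rw [Module.finrank_prod, Module.finrank_self,
        show Module.finrank ℝ (EuclideanSpace ℝ (Fin m)) = m from finrank_euclideanSpace_fin]
    rw [hV] at hrn
    have hr1 : Module.finrank ℝ ↥(LinearMap.range f) ≤ 1 := by
      simpa using Submodule.finrank_le (LinearMap.range f)
    have hrne : LinearMap.range f ≠ ⊥ := by
      intro h
      have hf0 : f = 0 := LinearMap.range_eq_bot.mp h
      rcases not_and_or.mp hζ with hξ | hη
      · have h7 := hf (1, 0)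
        rw [hf0] at h7
        simp at h7
        exact hξ h7.symm
      · have h7 := hf (0, η)
        rw [hf0] at h7
        simp only [LinearMap.zero_apply, mul_zero, zero_add] at h7
        exact hη (inner_self_eq_zero.mp h7.symm)
    have hrpos : Module.finrank ℝ ↥(LinearMap.range f) ≠ 0 := by
      intro h
      exact hrne (Submodule.finrank_eq_zero.mp h)
    omega
  refine ⟨hset, ?_⟩
  -- extract m linearly independent vectors
  obtain ⟨bset, hbC, hbspan, hbli⟩ := exists_linearIndependent ℝ C
  have hbfin : bset.Finite := hbli.setFinite
  haveI := hbfin.fintype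
  have hcard : Fintype.card ↥bset = m := by
    have h6 := finrank_span_set_eq_card (s := bset) hbli
    rw [hbspan, hspan, hfr] at h6
    rw [← Set.toFinset_card]
    omega
  let e : Fin m ≃ ↥bset := (Fintype.equivFinOfCardEq hcard).symm
  refine ⟨fun i => ((e i : ℝ × EuclideanSpace ℝ (Fin m))), fun i => hbC (e i).2, ?_⟩
  exact hbli.comp e (e.injective)
end

section
/- Let n ≥ 3, let ζ = (ξ, η) ∈ ℝ × ℝⁿ⁻¹ be nonzero, and let δ > 0. Set C = { (s, y) ∈ ℝ × ℝⁿ⁻¹ : |y| = 1, ξ s + ⟨η, y⟩ = 0, |s| < δ }, viewed as a subset of ℝⁿ. Let B : ℝⁿ → Mₙ(ℝ) satisfy B(−u) = B(u) for all u, with B(u) invertible for every u ∈ C. Let φ ∈ ℝⁿ and let Φ ∈ Mₙ(ℝ) be antisymmetric (Φᵀ = −Φ). If B(u)·φ + Φ·u = 0 for every u ∈ C, then φ = 0 and Φ = 0. -/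
open Matrix RealInnerProductSpace

/-!
Since `n - 1 ≥ 2` there is a unit `w ⊥ η`, and `u₀ = (0, w) ∈ C`. The set `C` is symmetric
under `u ↦ -u` and `B` is even, so adding the equations at `u₀` and `-u₀` gives `B(u₀)φ = 0`,
hence `φ = 0` by invertibility of `B(u₀)`.

Then `Φ` vanishes on `C`. By homogeneity it vanishes on the cone `{|s| < δ|y|}` inside the
hyperplane `ζ^⊥ = {ξ s + ⟨η, y⟩ = 0}`, a relatively open subset of `ζ^⊥` containing `u₀`,
so by linearity `Φ` vanishes on all of `ζ^⊥`. Finally an antisymmetric matrix vanishing on a hyperplane `ν^⊥` is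
zero: `⟨ν, Φν⟩ = 0` puts `Φν` in `ν^⊥`, so `|Φν|² = -⟨ν, Φ(Φν)⟩ = 0`.
-/

open Filter Topology in
theorem LinearMap.eq_zero_of_eq_zero_on_open_inter {M F : Type*} [AddCommGroup M] [Module ℝ M]
    [TopologicalSpace M] [ContinuousAdd M] [ContinuousSMul ℝ M] [AddCommGroup F] [Module ℝ F]
    (f : M →ₗ[ℝ] F) {K : Submodule ℝ M} {U : Set M} (hU : IsOpen U) {p : M} (hpU : p ∈ U)
    (hpK : p ∈ K) (hf : ∀ x ∈ U, x ∈ K → f x = 0) {x : M} (hx : x ∈ K) : f x = 0 := by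
  have hlim : Tendsto (fun t : ℝ => p + t • x) (𝓝[>] 0) (𝓝 p) := by
    have := tendsto_const_nhds (x := p).add ((tendsto_id (x := 𝓝 (0 : ℝ))).smul_const x)
    simpa using this.mono_left nhdsWithin_le_nhds
  obtain ⟨t, htU, ht⟩ := ((hlim.eventually (hU.mem_nhds hpU)).and self_mem_nhdsWithin).exists
  have hpt := hf _ htU (K.add_mem hpK (K.smul_mem t hx))
  rw [map_add, map_smul, hf p hpU hpK, zero_add] at hpt
  exact (smul_eq_zero.mp hpt).resolve_left ht.ne'

theorem LinearMap.eq_zero_of_eq_zero_on_sphere_inter_slab {E F : Type*} [NormedAddCommGroup E]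
    [NormedSpace ℝ E] [AddCommGroup F] [Module ℝ F] (f : ℝ × E →ₗ[ℝ] F)
    {K : Submodule ℝ (ℝ × E)} {δ : ℝ} (hδ : 0 < δ) {w : E} (hw : ‖w‖ = 1) (hwK : (0, w) ∈ K)
    (hf : ∀ s y, ‖y‖ = 1 → (s, y) ∈ K → |s| < δ → f (s, y) = 0) {x : ℝ × E} (hx : x ∈ K) :
    f x = 0 := by
  refine f.eq_zero_of_eq_zero_on_open_inter (U := {x | |x.1| < δ * ‖x.2‖})
    (isOpen_lt (by fun_prop) (by fun_prop)) (by simpa [hw] using hδ) hwK ?_ hx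
  rintro ⟨s, y⟩ hU hK
  have hy : 0 < ‖y‖ := pos_of_mul_pos_right ((abs_nonneg s).trans_lt hU) hδ.le
  have hscaled : f (‖y‖⁻¹ • (s, y)) = 0 := by
    have hK' := K.smul_mem ‖y‖⁻¹ hK
    rw [Prod.smul_mk, smul_eq_mul] at hK' ⊢
    refine hf _ _ (norm_smul_inv_norm (norm_pos_iff.mp hy)) hK' ?_
    rw [abs_mul, abs_inv, abs_norm, inv_mul_lt_iff₀ hy, mul_comm]
    exact hU
  rwa [map_smul, smul_eq_zero, or_iff_right (inv_ne_zero hy.ne')] at hscaled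

theorem exists_norm_eq_one_inner_eq_zero {E : Type*} [NormedAddCommGroup E]
    [InnerProductSpace ℝ E] [FiniteDimensional ℝ E] (hE : 1 < Module.finrank ℝ E) (η : E) :
    ∃ w : E, ‖w‖ = 1 ∧ ⟪η, w⟫ = 0 := by
  have hker : LinearMap.ker (innerₛₗ ℝ η) ≠ ⊥ :=
    LinearMap.ker_ne_bot_of_finrank_lt (by simpa using hE)
  obtain ⟨v, hv, hv0⟩ := Submodule.exists_mem_ne_zero_of_ne_bot hker
  refine ⟨‖v‖⁻¹ • v, norm_smul_inv_norm hv0, ?_⟩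
  rw [inner_smul_right, show ⟪η, v⟫ = 0 from hv, mul_zero]

theorem Matrix.eq_zero_of_transpose_eq_neg_of_mulVec_eq_zero_on_hyperplane {ι R : Type*}
    [Fintype ι] [Field R] [LinearOrder R] [IsStrictOrderedRing R]
    {Φ : Matrix ι ι R} (hΦ : Φᵀ = -Φ) {ν : ι → R} (hν : ν ≠ 0)
    (hker : ∀ x, ν ⬝ᵥ x = 0 → Φ *ᵥ x = 0) : Φ = 0 := by
  have hskew : ∀ a b, a ⬝ᵥ Φ *ᵥ b = -(Φ *ᵥ a ⬝ᵥ b) := fun a b => by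
    rw [dotProduct_mulVec, ← mulVec_transpose, hΦ, neg_mulVec, neg_dotProduct]
  have hνΦν : ν ⬝ᵥ Φ *ᵥ ν = 0 := by
    have := hskew ν ν
    rw [dotProduct_comm (Φ *ᵥ ν)] at this
    linarith
  have hΦν : Φ *ᵥ ν = 0 := by
    refine dotProduct_self_eq_zero.mp ?_
    rw [← neg_eq_zero, ← hskew, hker _ hνΦν, dotProduct_zero]
  have hνν : ν ⬝ᵥ ν ≠ 0 := fun h => hν (dotProduct_self_eq_zero.mp h)
  refine ext_iff_mulVec.mpr fun x => ?_
  set c := (ν ⬝ᵥ x) / (ν ⬝ᵥ ν)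
  have hxc : ν ⬝ᵥ (x - c • ν) = 0 := by
    rw [dotProduct_sub, dotProduct_smul, smul_eq_mul, div_mul_cancel₀ _ hνν, sub_self]
  rw [zero_mulVec, ← sub_add_cancel x (c • ν), mulVec_add, mulVec_smul, hker _ hxc, hΦν,
    smul_zero, add_zero]

def euclideanConsEquiv (m : ℕ) : (ℝ × EuclideanSpace ℝ (Fin m)) ≃ₗ[ℝ] (Fin (m + 1) → ℝ) :=
  ((LinearEquiv.refl ℝ ℝ).prodCongr (WithLp.linearEquiv 2 ℝ (Fin m → ℝ))).trans
    (Fin.consLinearEquiv ℝ fun _ => ℝ)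

theorem euclideanConsEquiv_apply {m : ℕ} (s : ℝ) (y : EuclideanSpace ℝ (Fin m)) :
    euclideanConsEquiv m (s, y) = Fin.cons s (fun i => y i) := rfl

theorem euclideanConsEquiv_dotProduct {m : ℕ} (p q : ℝ × EuclideanSpace ℝ (Fin m)) :
    euclideanConsEquiv m p ⬝ᵥ euclideanConsEquiv m q = p.1 * q.1 + ⟪p.2, q.2⟫ := by
  rw [EuclideanSpace.inner_eq_star_dotProduct, star_trivial, dotProduct_comm (WithLp.ofLp q.2)]
  exact cons_dotProduct_cons _ _ _ _

theorem Matrix.eq_zero_of_transpose_eq_neg_of_mulVec_eq_zero_on_band {m : ℕ} {ξ : ℝ}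
    {η : EuclideanSpace ℝ (Fin m)} (hζ : ¬(ξ = 0 ∧ η = 0)) {δ : ℝ} (hδ : 0 < δ)
    {w : EuclideanSpace ℝ (Fin m)} (hw : ‖w‖ = 1) (hηw : ⟪η, w⟫ = 0)
    {Φ : Matrix (Fin (m + 1)) (Fin (m + 1)) ℝ} (hΦ : Φᵀ = -Φ)
    (hC : ∀ s y, ‖y‖ = 1 → ξ * s + ⟪η, y⟫ = 0 → |s| < δ →
      Φ *ᵥ euclideanConsEquiv m (s, y) = 0) :
    Φ = 0 := by
  set e := euclideanConsEquiv m
  set K := LinearMap.ker (ξ • LinearMap.fst ℝ ℝ _ + innerₛₗ ℝ η ∘ₗ LinearMap.snd ℝ ℝ _)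
  have hK : ∀ q, q ∈ K ↔ ξ * q.1 + ⟪η, q.2⟫ = 0 := fun _ => Iff.rfl
  refine eq_zero_of_transpose_eq_neg_of_mulVec_eq_zero_on_hyperplane hΦ (ν := e (ξ, η))
    (by simpa [Prod.ext_iff] using hζ) fun x hx => ?_
  rw [← e.apply_symm_apply x] at hx ⊢
  rw [euclideanConsEquiv_dotProduct] at hx
  exact (Φ.mulVecLin ∘ₗ e.toLinearMap).eq_zero_of_eq_zero_on_sphere_inter_slab hδ hw
    ((hK _).mpr (by rw [hηw, mul_zero, add_zero])) hC ((hK _).mpr hx)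

/-- Ellipticity at fiber infinity. Here `n = m + 1 ≥ 3`, `(s, y)` is
identified with the vector `Fin.cons s y ∈ ℝⁿ`, `C` is the set of such vectors with
`|y| = 1`, `ξs + ⟨η,y⟩ = 0`, `|s| < δ`, `B` is an even matrix weight invertible on
`C`, `φ` a vector and `Φ` an antisymmetric matrix. If `B(u)φ + Φu = 0` on `C`, then
`φ = 0` and `Φ = 0`. -/
theorem stmt_10 (m : ℕ) (hm : 2 ≤ m)
    (ξ : ℝ) (η : EuclideanSpace ℝ (Fin m)) (hζ : ¬(ξ = 0 ∧ η = 0))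
    (δ : ℝ) (hδ : 0 < δ)
    (B : (Fin (m + 1) → ℝ) → Matrix (Fin (m + 1)) (Fin (m + 1)) ℝ)
    (hBeven : ∀ u, B (-u) = B u)
    (hBinv : ∀ (s : ℝ) (y : EuclideanSpace ℝ (Fin m)),
      ‖y‖ = 1 → ξ * s + ⟪η, y⟫ = 0 → |s| < δ →
        IsUnit (B (Fin.cons s (fun i => y i))))
    (φ : Fin (m + 1) → ℝ)
    (Φ : Matrix (Fin (m + 1)) (Fin (m + 1)) ℝ) (hΦ : Φᵀ = -Φ)
    (h : ∀ (s : ℝ) (y : EuclideanSpace ℝ (Fin m)),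
      ‖y‖ = 1 → ξ * s + ⟪η, y⟫ = 0 → |s| < δ →
        B (Fin.cons s (fun i => y i)) *ᵥ φ + Φ *ᵥ (Fin.cons s (fun i => y i)) = 0) :
    φ = 0 ∧ Φ = 0 := by
  simp only [← euclideanConsEquiv_apply] at hBinv h
  set e := euclideanConsEquiv m
  obtain ⟨w, hw, hηw⟩ := exists_norm_eq_one_inner_eq_zero
    (by rw [finrank_euclideanSpace_fin]; exact hm) η
  have hw₀ : ξ * 0 + ⟪η, w⟫ = 0 := by rw [hηw, mul_zero, add_zero]
  have hδ₀ : |(0 : ℝ)| < δ := by rwa [abs_zero]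
  have hφ : φ = 0 := by
    have hu := h 0 w hw hw₀ hδ₀
    have hnegu := h 0 (-w) (by rwa [norm_neg])
      (by rw [inner_neg_right, hηw, neg_zero, mul_zero, add_zero]) hδ₀
    rw [← neg_zero, ← Prod.neg_mk, map_neg, hBeven, mulVec_neg] at hnegu
    have hBφ : B (e (0, w)) *ᵥ φ = 0 := by
      have h2 : (2 : ℝ) • (B (e (0, w)) *ᵥ φ) = 0 := by
        rw [two_smul]
        linear_combination hu + hnegu
      exact (smul_eq_zero.mp h2).resolve_left two_ne_zero
    exact mulVec_injective_iff_isUnit.mpr (hBinv 0 w hw hw₀ hδ₀)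
      (hBφ.trans (mulVec_zero _).symm)
  subst hφ
  refine ⟨rfl, eq_zero_of_transpose_eq_neg_of_mulVec_eq_zero_on_band hζ hδ hw hηw hΦ
    fun s y hy hsy hs => ?_⟩
  simpa only [mulVec_zero, zero_add] using h s y hy hsy hs
end

section
/- Let n ≥ 3, let ξ ∈ ℝ, η ∈ ℝⁿ⁻¹, and F > 0. For a unit vector Ŷ ∈ ℝⁿ⁻¹ (|Ŷ| = 1), define u(Ŷ) ∈ ℂⁿ to be the vector whose first coordinate is −((ξ − iF)/(ξ² + F²)) ⟨η, Ŷ⟩ and whose remaining n−1 coordinates are Ŷ. Let B assign to each unit vector Ŷ ∈ ℝⁿ⁻¹ an invertible matrix B(Ŷ) ∈ Mₙ(ℂ) with B(−Ŷ) = B(Ŷ). Let φ ∈ ℂⁿ and let Φ ∈ Mₙ(ℂ) be antisymmetric (Φᵀ = −Φ, transpose without conjugation). If B(Ŷ)·φ + Φ·u(Ŷ) = 0 for every unit vector Ŷ ∈ ℝⁿ⁻¹, then φ = 0 and Φ = 0. -/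
open Matrix RealInnerProductSpace

/-- Ellipticity at finite points of the scattering cotangent bundle.
Here `n = m + 1 ≥ 3`; for a unit vector `Ŷ ∈ ℝⁿ⁻¹` the vector `u(Ŷ) ∈ ℂⁿ` has first
coordinate `−((ξ − iF)/(ξ² + F²)) ⟨η, Ŷ⟩` and remaining coordinates `Ŷ`. If `B` is an
even invertible matrix weight, `Φ` antisymmetric, and `B(Ŷ)φ + Φ·u(Ŷ) = 0` for all
unit `Ŷ`, then `φ = 0` and `Φ = 0`. -/
theorem stmt_11 (m : ℕ) (hm : 2 ≤ m)
    (ξ : ℝ) (η : EuclideanSpace ℝ (Fin m)) (F : ℝ) (hF : 0 < F)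
    (B : EuclideanSpace ℝ (Fin m) → Matrix (Fin (m + 1)) (Fin (m + 1)) ℂ)
    (hBeven : ∀ Y, B (-Y) = B Y)
    (hBinv : ∀ Y : EuclideanSpace ℝ (Fin m), ‖Y‖ = 1 → IsUnit (B Y))
    (φ : Fin (m + 1) → ℂ)
    (Φ : Matrix (Fin (m + 1)) (Fin (m + 1)) ℂ) (hΦ : Φᵀ = -Φ)
    (h : ∀ Y : EuclideanSpace ℝ (Fin m), ‖Y‖ = 1 →
      B Y *ᵥ φ
          + Φ *ᵥ (Fin.cons
              (-(((ξ : ℂ) - Complex.I * (F : ℂ)) / ((ξ ^ 2 + F ^ 2 : ℝ) : ℂ)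
                  * ((⟪η, Y⟫ : ℝ) : ℂ)))
              (fun i => ((Y i : ℝ) : ℂ)))
        = 0) :
    φ = 0 ∧ Φ = 0 := by
  set c : ℂ := ((ξ : ℂ) - Complex.I * (F : ℂ)) / ((ξ ^ 2 + F ^ 2 : ℝ) : ℂ) with hc
  set u : EuclideanSpace ℝ (Fin m) → (Fin (m+1) → ℂ) := fun Y =>
    Fin.cons (-(c * ((⟪η, Y⟫ : ℝ) : ℂ))) (fun i => ((Y i : ℝ) : ℂ)) with hu
  have hneg : ∀ Y : EuclideanSpace ℝ (Fin m), u (-Y) = -(u Y) := by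
    intro Y
    funext i
    refine Fin.cases ?_ ?_ i
    · simp [hu, inner_neg_right]
    · intro j
      simp [hu]
  have key : ∀ Y : EuclideanSpace ℝ (Fin m), ‖Y‖ = 1 →
      B Y *ᵥ φ = 0 ∧ Φ *ᵥ u Y = 0 := by
    intro Y hY
    have h1 : B Y *ᵥ φ + Φ *ᵥ u Y = 0 := h Y hY
    have h2 : B (-Y) *ᵥ φ + Φ *ᵥ u (-Y) = 0 := h (-Y) (by simpa using hY)
    rw [hBeven, hneg, Matrix.mulVec_neg] at h2
    constructor
    · funext i
      have e1 := congrFun h1 i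
      have e2 := congrFun h2 i
      simp only [Pi.add_apply, Pi.neg_apply, Pi.zero_apply] at e1 e2 ⊢
      linear_combination (e1 + e2) / 2
    · funext i
      have e1 := congrFun h1 i
      have e2 := congrFun h2 i
      simp only [Pi.add_apply, Pi.neg_apply, Pi.zero_apply] at e1 e2 ⊢
      linear_combination (e1 - e2) / 2
  have hm0 : 0 < m := by omega
  have hφ : φ = 0 := by
    set Y0 : EuclideanSpace ℝ (Fin m) := EuclideanSpace.single ⟨0, hm0⟩ (1:ℝ)
    have hY0 : ‖Y0‖ = 1 := by simp [Y0, EuclideanSpace.norm_single]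
    have hB := (key Y0 hY0).1
    obtain ⟨N, hN⟩ := (hBinv Y0 hY0).exists_left_inv
    calc φ = (1 : Matrix (Fin (m+1)) (Fin (m+1)) ℂ) *ᵥ φ := by rw [Matrix.one_mulVec]
    _ = N *ᵥ (B Y0 *ᵥ φ) := by rw [Matrix.mulVec_mulVec, hN]
    _ = 0 := by rw [hB, Matrix.mulVec_zero]
  have hΦ' : ∀ i j, Φ j i = -Φ i j := fun i j => by
    have := congrFun (congrFun hΦ i) j
    simpa using this
  have hcol : ∀ (i : Fin (m+1)) (j : Fin m), Φ i j.succ = c * (η j : ℂ) * Φ i 0 := by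
    intro i j
    set Y : EuclideanSpace ℝ (Fin m) := EuclideanSpace.single j (1:ℝ) with hY
    have hYn : ‖Y‖ = 1 := by simp [Y, EuclideanSpace.norm_single]
    have he := congrFun (key Y hYn).2 i
    have hinner : ⟪η, Y⟫ = η j := by
      simp [Y, EuclideanSpace.inner_single_right]
    rw [hu] at he
    simp only [Matrix.mulVec, dotProduct, Fin.sum_univ_succ, Fin.cons_zero, Fin.cons_succ,
      Pi.zero_apply, hinner] at he
    have hsum : ∑ k : Fin m, Φ i k.succ * ((Y k : ℝ) : ℂ) = Φ i j.succ := by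
      have hYk : ∀ k : Fin m, ((Y k : ℝ) : ℂ) = if k = j then 1 else 0 := by
        intro k
        simp [Y, EuclideanSpace.single_apply]
        split <;> simp
      simp [hYk, mul_ite]
    rw [hsum] at he
    linear_combination he
  have hdiag : ∀ i, Φ i i = 0 := by
    intro i
    have := hΦ' i i
    linear_combination this / 2
  have hΦ0 : Φ = 0 := by
    have hrow0 : ∀ j : Fin m, Φ 0 j.succ = 0 := by
      intro j
      rw [hcol 0 j, hdiag 0, mul_zero]
    have hcol0 : ∀ i : Fin (m+1), Φ i 0 = 0 := by
      intro i
      refine Fin.cases (hdiag 0) ?_ i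
      intro k
      rw [← neg_eq_zero, ← hΦ' k.succ 0, hrow0 k]
    have hall : ∀ i j, Φ i j = 0 := by
      intro i j
      refine Fin.cases (hcol0 i) ?_ j
      intro k
      rw [hcol i k, hcol0 i, mul_zero]
    funext i j
    exact hall i j
  exact ⟨hφ, hΦ0⟩
end
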